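/- arXiv:math/0601153 — 4 statements merged into one kernel-verified Lean document; each statement's English description precedes it below -/
import Mathlib

section
/- Suppose every sequence (𝒰_n) of countable Borel γ-covers of X admits selections U_n ∈ 𝒰_n with {U_n : n ∈ ℕ} a τ-cover of X (property S₁(B_Γ, B_T)). Then every Borel image of X in ℕ → ℕ satisfies the ⟨≤,<⟩-excluded middle property: there exists g : ℕ → ℕ such that for every f in the image, {n : f n ≤ g n} is infinite, and for all f, h in the image, at least one of {n : f n ≤ g n < h n} and {n : h n ≤ g n < f n} is finite. -/
/-- `U` (an ℕ-indexed countable family of subsets of `ℝ`) is a γ-cover of `X`. -/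
def IsGammaCover (X : Set ℝ) (U : ℕ → Set ℝ) : Prop :=
  (∀ m, ¬ X ⊆ U m) ∧ X ⊆ ⋃ m, U m ∧ (Set.range U).Infinite ∧
    ∀ x ∈ X, {m | x ∉ U m}.Finite

/-- `V` is a τ-cover of `X`. -/
def IsTauCover (X : Set ℝ) (V : ℕ → Set ℝ) : Prop :=
  (∀ n, ¬ X ⊆ V n) ∧ (∀ x ∈ X, {n | x ∈ V n}.Infinite) ∧
    ∀ x ∈ X, ∀ y ∈ X,
      {n | x ∈ V n ∧ y ∉ V n}.Finite ∨ {n | y ∈ V n ∧ x ∉ V n}.Finite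

theorem stmt_6 (X : Set ℝ)
    (hS1 : ∀ U : ℕ → ℕ → Set ℝ, (∀ n m, MeasurableSet (U n m)) →
      (∀ n, IsGammaCover X (U n)) →
      ∃ sel : ℕ → ℕ, IsTauCover X (fun n => U n (sel n)))
    (Ψ : ℝ → ℕ → ℕ) (hΨ : Measurable Ψ) :
    ∃ g : ℕ → ℕ,
      (∀ f ∈ Ψ '' X, {n | f n ≤ g n}.Infinite) ∧
      (∀ f ∈ Ψ '' X, ∀ h ∈ Ψ '' X,
        {n | f n ≤ g n ∧ g n < h n}.Finite ∨
        {n | h n ≤ g n ∧ g n < f n}.Finite) := by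
  classical
  -- S : coordinates on which Ψ '' X is bounded
  set S : Set ℕ := {n | ∃ B, ∀ x ∈ X, Ψ x n ≤ B} with hSdef
  set p : ℕ → Prop := fun n => n ∉ S with hpdef
  by_cases hfin : {n | p n}.Finite
  · -- Case A: cofinitely many bounded coordinates
    refine ⟨fun n => if h : n ∈ S then h.choose else 0, ?_, ?_⟩
    · rintro f ⟨x, hx, rfl⟩
      have hSsub : S ⊆ {n | Ψ x n ≤ if h : n ∈ S then h.choose else 0} := by
        intro n hn
        simp only [Set.mem_setOf_eq, dif_pos hn]
        exact hn.choose_spec x hx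
      have hSinf : S.Infinite := by
        have := hfin.infinite_compl
        have he : {n | p n}ᶜ = S := by
          ext n; simp [hpdef]
        rwa [he] at this
      exact hSinf.mono hSsub
    · rintro f ⟨x, hx, rfl⟩ h ⟨y, hy, rfl⟩
      left
      refine hfin.subset ?_
      rintro n ⟨_, h2⟩
      by_contra hn
      simp only [hpdef, Set.mem_setOf_eq, not_not] at hn
      simp only [dif_pos hn] at h2
      exact absurd (hn.choose_spec y hy) (not_le.mpr h2)
  · -- Case B: infinitely many unbounded coordinates
    have hpinf : {n | p n}.Infinite := hfin
    -- unboundedness on each coordinate in pᶜ... i.e. satisfying p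
    have hUnb : ∀ n, p n → ∀ B, ∃ x ∈ X, B < Ψ x n := by
      intro n hn B
      by_contra hcon
      push_neg at hcon
      exact hn ⟨B, hcon⟩
    -- the γ-covers
    set U : ℕ → ℕ → Set ℝ := fun k m => {x | Ψ x (Nat.nth p k) ≤ m} with hUdef
    have hmeas : ∀ k m, MeasurableSet (U k m) := by
      intro k m
      exact ((measurable_pi_apply (Nat.nth p k)).comp hΨ) measurableSet_Iic
    have hpk : ∀ k, p (Nat.nth p k) := Nat.nth_mem_of_infinite hpinf
    have hmono : ∀ k, Monotone (U k) := by
      intro k m m' hm x hx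
      exact le_trans hx hm
    have hgamma : ∀ k, IsGammaCover X (U k) := by
      intro k
      refine ⟨?_, ?_, ?_, ?_⟩
      · intro m hsub
        obtain ⟨x, hx, hlt⟩ := hUnb _ (hpk k) m
        exact absurd (hsub hx) (not_le.mpr hlt)
      · intro x _
        exact Set.mem_iUnion.mpr ⟨Ψ x (Nat.nth p k), by simp [hUdef]⟩
      · -- range infinite
        set next : ℕ → ℕ := fun B => Ψ (hUnb _ (hpk k) B).choose (Nat.nth p k) with hnext
        have hnextlt : ∀ B, B < next B := fun B =>
          (hUnb _ (hpk k) B).choose_spec.2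
        set a : ℕ → ℕ := fun i => next^[i] 0 with ha
        have hstep : ∀ i, a (i + 1) = next (a i) := by
          intro i; simp [ha, Function.iterate_succ_apply']
        have hseq : StrictMono (fun i => U k (a i)) := by
          apply strictMono_nat_of_lt_succ
          intro i
          rw [hstep i]
          constructor
          · exact hmono k (le_of_lt (hnextlt (a i)))
          · intro hsub
            have hmem : (hUnb _ (hpk k) (a i)).choose ∈ U k (next (a i)) := by
              simp [hUdef, hnext]
            have := hsub hmem
            exact absurd this (not_le.mpr ((hUnb _ (hpk k) (a i)).choose_spec.2))
        have hinj : Function.Injective (fun i => U k (a i)) := hseq.injective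
        exact (Set.infinite_range_of_injective hinj).mono
          (Set.range_subset_iff.mpr fun i => Set.mem_range_self (a i))
      · intro x _
        refine (Set.finite_Iio (Ψ x (Nat.nth p k))).subset (fun m hm => ?_)
        simp only [hUdef, Set.mem_setOf_eq, not_le] at hm
        exact hm
    obtain ⟨sel, htau⟩ := hS1 U hmeas hgamma
    refine ⟨fun n => if h : n ∈ S then h.choose else sel (Nat.count p n), ?_, ?_⟩
    · rintro f ⟨x, hx, rfl⟩
      have hT := htau.2.1 x hx
      refine (hT.image (Nat.nth_injective hpinf).injOn).mono ?_
      rintro n ⟨k, hk, rfl⟩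
      have h1 : Nat.nth p k ∉ S := hpk k
      simp only [Set.mem_setOf_eq, dif_neg h1, Nat.count_nth_of_infinite hpinf]
      exact hk
    · rintro f ⟨x, hx, rfl⟩ h ⟨y, hy, rfl⟩
      have key : ∀ x ∈ X, ∀ y ∈ X,
          {k | x ∈ U k (sel k) ∧ y ∉ U k (sel k)}.Finite →
          {n | Ψ x n ≤ (if h : n ∈ S then h.choose else sel (Nat.count p n)) ∧
            (if h : n ∈ S then h.choose else sel (Nat.count p n)) < Ψ y n}.Finite := by
        intro x hx y hy hK
        refine (hK.image (Nat.nth p)).subset ?_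
        rintro n ⟨h1, h2⟩
        have hn : n ∉ S := by
          intro hn
          rw [dif_pos hn] at h2
          exact absurd (hn.choose_spec y hy) (not_le.mpr h2)
        rw [dif_neg hn] at h1 h2
        refine ⟨Nat.count p n, ⟨?_, ?_⟩, Nat.nth_count hn⟩
        · show Ψ x (Nat.nth p (Nat.count p n)) ≤ sel (Nat.count p n)
          rwa [Nat.nth_count hn]
        · show ¬ Ψ y (Nat.nth p (Nat.count p n)) ≤ sel (Nat.count p n)
          rw [Nat.nth_count hn]
          exact not_le.mpr h2
      rcases htau.2.2 x hx y hy with hc | hc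
      · exact Or.inl (key x hx y hy hc)
      · exact Or.inr (key y hy x hx hc)
end

section
/- Suppose every Borel image of X in ℕ → ℕ satisfies the ⟨≤,<⟩-excluded middle property. Then X satisfies U^{ℵ₀}_1(B_Γ, B_T): for every sequence (𝒰_n) of countable Borel covers of X, none containing a finite subcover, where each 𝒰_n is a γ-cover, there exist nonempty finite subsets F_n ⊆ 𝒰_n such that the family {⋃F_n : n ∈ ℕ} is a τ-cover of X. -/
/-!
Code each point `x` by the function sending `n` to the least `m` with `x ∈ U n m`. This coding is Borel, and
`x` lies in `U n 0 ∪ ⋯ ∪ U n k` exactly when its code at `n` is at most `k`. Applying the excluded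
middle property to the image of `X` yields `g`, and the finite sets `{0, …, g n}` then turn the
two clauses of that property literally into the two clauses of a τ-cover; no finite union covers
`X` because no `𝒰_n` has a finite subcover.
-/

section FirstIndex

variable {α : Type*} (U : ℕ → Set α)

/-- Junk value `0` (`sInf ∅ = 0`) when `x` lies in no `U m`. -/
noncomputable def firstIndex (x : α) : ℕ := sInf {m | x ∈ U m}

theorem firstIndex_le_iff {x : α} {k : ℕ} :
    firstIndex U x ≤ k ↔ (∃ m ≤ k, x ∈ U m) ∨ ∀ m, x ∉ U m := by
  constructor
  · intro hk
    by_cases hx : ∃ m, x ∈ U m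
    · exact Or.inl ⟨firstIndex U x, hk, Nat.sInf_mem hx⟩
    · exact Or.inr (not_exists.1 hx)
  · rintro (⟨m, hmk, hxm⟩ | hx)
    · exact (Nat.sInf_le hxm).trans hmk
    · simp [firstIndex, hx]

theorem mem_biUnion_range_iff_firstIndex_le {x : α} (hx : x ∈ ⋃ m, U m) (k : ℕ) :
    x ∈ ⋃ m ∈ Finset.range (k + 1), U m ↔ firstIndex U x ≤ k := by
  obtain ⟨i, hi⟩ := Set.mem_iUnion.1 hx
  have hcovered : ¬ ∀ m, x ∉ U m := fun h => h i hi
  simp [firstIndex_le_iff, hcovered]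

theorem measurable_firstIndex [MeasurableSpace α] (hU : ∀ m, MeasurableSet (U m)) :
    Measurable (firstIndex U) := by
  refine measurable_of_Iic fun k => ?_
  have hpre : firstIndex U ⁻¹' Set.Iic k = (⋃ m ≤ k, U m) ∪ ⋂ m, (U m)ᶜ := by
    ext x
    simp [firstIndex_le_iff]
  rw [hpre]
  exact (MeasurableSet.biUnion (Set.to_countable _) fun m _ => hU m).union
    (MeasurableSet.iInter fun m => (hU m).compl)

end FirstIndex

theorem stmt_7 (X : Set ℝ)
    (hEMP : ∀ Ψ : ℝ → ℕ → ℕ, Measurable Ψ →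
      ∃ g : ℕ → ℕ,
        (∀ f ∈ Ψ '' X, {n | f n ≤ g n}.Infinite) ∧
        (∀ f ∈ Ψ '' X, ∀ h ∈ Ψ '' X,
          {n | f n ≤ g n ∧ g n < h n}.Finite ∨
          {n | h n ≤ g n ∧ g n < f n}.Finite)) :
    ∀ U : ℕ → ℕ → Set ℝ, (∀ n m, MeasurableSet (U n m)) →
      (∀ n, IsGammaCover X (U n)) →
      (∀ n, ∀ F : Finset ℕ, ¬ X ⊆ ⋃ m ∈ F, U n m) →
      ∃ F : ℕ → Finset ℕ, (∀ n, (F n).Nonempty) ∧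
        IsTauCover X (fun n => ⋃ m ∈ F n, U n m) := by
  intro U hU hgamma hfin
  set Ψ : ℝ → ℕ → ℕ := fun x n => firstIndex (U n) x
  obtain ⟨g, hlarge, hexcl⟩ :=
    hEMP Ψ (measurable_pi_lambda _ fun n => measurable_firstIndex (U n) (hU n))
  set V : ℕ → Set ℝ := fun n => ⋃ m ∈ Finset.range (g n + 1), U n m
  have hV : ∀ x ∈ X, ∀ n, x ∈ V n ↔ Ψ x n ≤ g n := fun x hx n =>
    mem_biUnion_range_iff_firstIndex_le (U n) ((hgamma n).2.1 hx) (g n)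
  have hdiff : ∀ x ∈ X, ∀ y ∈ X,
      {n | x ∈ V n ∧ y ∉ V n} ⊆ {n | Ψ x n ≤ g n ∧ g n < Ψ y n} :=
    fun x hx y hy n ⟨hxn, hyn⟩ => ⟨(hV x hx n).1 hxn, not_le.1 (mt (hV y hy n).2 hyn)⟩
  refine ⟨fun n => Finset.range (g n + 1), fun n => Finset.nonempty_range_add_one,
    fun n => hfin n _, fun x hx => (hlarge _ ⟨x, hx, rfl⟩).mono fun n => (hV x hx n).2,
    fun x hx y hy => ?_⟩
  rcases hexcl _ ⟨x, hx, rfl⟩ _ ⟨y, hy, rfl⟩ with h | h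
  · exact Or.inl (h.subset (hdiff x hx y hy))
  · exact Or.inr (h.subset (hdiff y hy x hx))
end

section
/- Let Y ⊆ ℕ → ℕ be unbounded with respect to eventual domination (i.e., for every g : ℕ → ℕ there is f ∈ Y with f n > g n for infinitely many n). For each f ∈ Y define f₀, f₁ : ℕ → ℕ by f₀(2n) = f(n), f₀(2n+1) = 0, f₁(2n+1) = f(n), f₁(2n) = 0, and let Y_i = {f_i : f ∈ Y}. Then Y₀ ∪ Y₁ does not satisfy the ⟨≤,<⟩-excluded middle property. -/
theorem stmt_8 (Y : Set (ℕ → ℕ))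
    (hY : ∀ g : ℕ → ℕ, ∃ f ∈ Y, {n | g n < f n}.Infinite) :
    ¬ ∃ g : ℕ → ℕ,
      (∀ f ∈ ((fun (f : ℕ → ℕ) (n : ℕ) => if Even n then f (n / 2) else 0) '' Y) ∪
             ((fun (f : ℕ → ℕ) (n : ℕ) => if Even n then 0 else f (n / 2)) '' Y),
        {n | f n ≤ g n}.Infinite) ∧
      (∀ f ∈ ((fun (f : ℕ → ℕ) (n : ℕ) => if Even n then f (n / 2) else 0) '' Y) ∪
             ((fun (f : ℕ → ℕ) (n : ℕ) => if Even n then 0 else f (n / 2)) '' Y),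
       ∀ h ∈ ((fun (f : ℕ → ℕ) (n : ℕ) => if Even n then f (n / 2) else 0) '' Y) ∪
             ((fun (f : ℕ → ℕ) (n : ℕ) => if Even n then 0 else f (n / 2)) '' Y),
        {n | f n ≤ g n ∧ g n < h n}.Finite ∨
        {n | h n ≤ g n ∧ g n < f n}.Finite) := by
  rintro ⟨g, -, hpair⟩
  obtain ⟨f, hfY, hS⟩ := hY (fun n => max (g (2 * n)) (g (2 * n + 1)))
  set F0 : ℕ → ℕ := fun n => if Even n then f (n / 2) else 0 with hF0
  set F1 : ℕ → ℕ := fun n => if Even n then 0 else f (n / 2) with hF1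
  have hmem0 : F0 ∈ ((fun (f : ℕ → ℕ) (n : ℕ) => if Even n then f (n / 2) else 0) '' Y) ∪
      ((fun (f : ℕ → ℕ) (n : ℕ) => if Even n then 0 else f (n / 2)) '' Y) :=
    Set.mem_union_left _ ⟨f, hfY, rfl⟩
  have hmem1 : F1 ∈ ((fun (f : ℕ → ℕ) (n : ℕ) => if Even n then f (n / 2) else 0) '' Y) ∪
      ((fun (f : ℕ → ℕ) (n : ℕ) => if Even n then 0 else f (n / 2)) '' Y) :=
    Set.mem_union_right _ ⟨f, hfY, rfl⟩
  have hA : {m | F0 m ≤ g m ∧ g m < F1 m}.Infinite := by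
    apply Set.Infinite.mono (s := (fun n => 2 * n + 1) '' {n | max (g (2 * n)) (g (2 * n + 1)) < f n})
    · rintro m ⟨n, hn, rfl⟩
      have hodd : ¬ Even (2 * n + 1) := by simp [parity_simps]
      have hdiv : (2 * n + 1) / 2 = n := by omega
      constructor
      · simp [hF0, hodd]
      · simp only [hF1, hodd, if_neg, hdiv, if_false]
        exact lt_of_le_of_lt (le_max_right _ _) hn
    · exact hS.image (fun a _ b _ h => by omega)
  have hB : {m | F1 m ≤ g m ∧ g m < F0 m}.Infinite := by
    apply Set.Infinite.mono (s := (fun n => 2 * n) '' {n | max (g (2 * n)) (g (2 * n + 1)) < f n})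
    · rintro m ⟨n, hn, rfl⟩
      have heven : Even (2 * n) := by simp [parity_simps]
      have hdiv : (2 * n) / 2 = n := by omega
      constructor
      · simp [hF1, heven]
      · simp only [hF0, heven, if_true, hdiv]
        exact lt_of_le_of_lt (le_max_left _ _) hn
    · exact hS.image (fun a _ b _ h => by omega)
  rcases hpair F0 hmem0 F1 hmem1 with h | h
  · exact hA h
  · exact hB h
end

section
/- With notation as follows: X a set, for each n a monotone increasing sequence of proper subsets (V^n_m)_m covering X, and Ψ : X → (ℕ → ℕ) given by Ψ(x)(n) = min{m : x ∈ V^n_m}. If g : ℕ → ℕ avoids middles in Ψ[X] with respect to ⟨≤,<⟩ (for each f ∈ Ψ[X], {n : f n ≤ g n} is infinite; for all f, h ∈ Ψ[X], one of {n : f n ≤ g n < h n}, {n : h n ≤ g n < f n} is finite), then the family {V^n_{g(n)} : n ∈ ℕ} is a τ-cover of X. -/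
theorem Monotone.mem_iff_sInf_le {X : Type*} {V : ℕ → Set X} (hV : Monotone V) {x : X}
    (hx : ∃ k, x ∈ V k) {m : ℕ} : x ∈ V m ↔ sInf {k | x ∈ V k} ≤ m :=
  ⟨fun hm => Nat.sInf_le hm, fun hle => hV hle (Nat.sInf_mem hx)⟩

theorem stmt_15 (X : Type*) (V : ℕ → ℕ → Set X)
    (hmono : ∀ n, Monotone (V n))
    (hproper : ∀ n m, V n m ≠ Set.univ)
    (hcov : ∀ n, (⋃ m, V n m) = Set.univ)
    (Ψ : X → ℕ → ℕ) (hΨ : ∀ x n, Ψ x n = sInf {m | x ∈ V n m})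
    (g : ℕ → ℕ)
    (h1 : ∀ f ∈ Set.range Ψ, {n | f n ≤ g n}.Infinite)
    (h2 : ∀ f ∈ Set.range Ψ, ∀ h ∈ Set.range Ψ,
      {n | f n ≤ g n ∧ g n < h n}.Finite ∨
      {n | h n ≤ g n ∧ g n < f n}.Finite) :
    (∀ n, V n (g n) ≠ Set.univ) ∧
    (∀ x : X, {n | x ∈ V n (g n)}.Infinite) ∧
    (∀ x y : X,
      {n | x ∈ V n (g n) ∧ y ∉ V n (g n)}.Finite ∨
      {n | y ∈ V n (g n) ∧ x ∉ V n (g n)}.Finite) := by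
  have mem_iff (x : X) (n m : ℕ) : x ∈ V n m ↔ Ψ x n ≤ m := by
    rw [hΨ]
    exact (hmono n).mem_iff_sInf_le (Set.mem_iUnion.mp (hcov n ▸ Set.mem_univ x))
  simp_rw [mem_iff, not_le]
  exact ⟨fun n => hproper n (g n), fun x => h1 _ ⟨x, rfl⟩,
    fun x y => h2 _ ⟨x, rfl⟩ _ ⟨y, rfl⟩⟩
end
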